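/- arXiv:math/9202208 — 5 statements merged into one kernel-verified Lean document; each statement's English description precedes it below -/
import Mathlib

section
/- Let $M$ and $N$ be smooth connected manifolds and let $i : M \to N$ be an immersion. Suppose $f : M \to M$ is a diffeomorphism with $i \circ f = i$ and $f$ has a fixed point $x_0 \in M$. Then $f = \mathrm{id}_M$. -/
/-!
An immersion is locally injective: in charts, composing it with a left inverse of its injective
differential gives a map with invertible differential, which is injective near the point by the
inverse function theorem. Hence if `i ∘ f = i`, the fixed-point set of `f` is open; it is closed
since `M` is Hausdorff, and nonempty, so it is all of the connected manifold `M`.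
-/

open Function Set
open scoped Manifold Topology ContDiff

theorem HasStrictFDerivAt.exists_mem_nhds_injOn
    {𝕜 : Type*} [NontriviallyNormedField 𝕜] [CompleteSpace 𝕜]
    {E : Type*} [NormedAddCommGroup E] [NormedSpace 𝕜 E] [CompleteSpace E]
    {F : Type*} [NormedAddCommGroup F] [NormedSpace 𝕜 F] [FiniteDimensional 𝕜 F]
    {g : E → F} {g' : E →L[𝕜] F} {a : E} (hg : HasStrictFDerivAt g g' a)
    (hg' : Injective g') : ∃ U ∈ 𝓝 a, InjOn g U := by
  obtain ⟨L₀, hL₀⟩ := LinearMap.exists_leftInverse_of_injective (g' : E →ₗ[𝕜] F)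
    (by rwa [LinearMap.ker_eq_bot, ContinuousLinearMap.coe_coe])
  let L := LinearMap.toContinuousLinearMap L₀
  have hLg' : L.comp g' = ((ContinuousLinearEquiv.refl 𝕜 E : E ≃L[𝕜] E) : E →L[𝕜] E) :=
    ContinuousLinearMap.coe_injective hL₀
  -- composing with a left inverse of `g'` reduces to the inverse function theorem
  have hLg : HasStrictFDerivAt (L ∘ g) _ a := hLg' ▸ L.hasStrictFDerivAt.comp a hg
  let φ := hLg.toOpenPartialHomeomorph (L ∘ g)
  refine ⟨φ.source, φ.open_source.mem_nhds hLg.mem_toOpenPartialHomeomorph_source,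
    fun x hx y hy hxy => φ.injOn hx hy ?_⟩
  simp [φ, hLg.toOpenPartialHomeomorph_coe, hxy]

theorem ContMDiffAt.exists_mem_nhds_injOn
    {𝕜 : Type*} [RCLike 𝕜]
    {E : Type*} [NormedAddCommGroup E] [NormedSpace 𝕜 E] [CompleteSpace E]
    {H : Type*} [TopologicalSpace H] {I : ModelWithCorners 𝕜 E H} [I.Boundaryless]
    {M : Type*} [TopologicalSpace M] [ChartedSpace H M]
    {E' : Type*} [NormedAddCommGroup E'] [NormedSpace 𝕜 E'] [FiniteDimensional 𝕜 E']
    {H' : Type*} [TopologicalSpace H'] {J : ModelWithCorners 𝕜 E' H'}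
    {N : Type*} [TopologicalSpace N] [ChartedSpace H' N]
    {n : WithTop ℕ∞} {i : M → N} {x : M} (hi : ContMDiffAt I J n i x) (hn : n ≠ 0)
    (hi' : Injective (mfderiv I J i x)) : ∃ U ∈ 𝓝 x, InjOn i U := by
  set φ := extChartAt I x
  set g := writtenInExtChartAt I J x i
  have hg : ContDiffAt 𝕜 n g (φ x) := by
    have := (contMDiffAt_iff.mp hi).2
    rwa [I.range_eq_univ, contDiffWithinAt_univ] at this
  have hg' : mfderiv I J i x = fderiv 𝕜 g (φ x) := by
    rw [(hi.mdifferentiableAt hn).mfderiv, I.range_eq_univ, fderivWithin_univ]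
  obtain ⟨V, hV, hgV⟩ := (hg.hasStrictFDerivAt hn).exists_mem_nhds_injOn (hg' ▸ hi')
  refine ⟨φ.source ∩ φ ⁻¹' V, Filter.inter_mem (extChartAt_source_mem_nhds x)
    ((continuousAt_extChartAt x).preimage_mem_nhds hV), ?_⟩
  rintro a ⟨ha, haV⟩ b ⟨hb, hbV⟩ hab
  refine φ.injOn ha hb (hgV haV hbV ?_)
  change extChartAt J (i x) (i (φ.symm (φ a))) = extChartAt J (i x) (i (φ.symm (φ b)))
  rw [φ.left_inv ha, φ.left_inv hb, hab]

theorem stmt_0_general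
    {E : Type*} [NormedAddCommGroup E] [NormedSpace ℝ E] [FiniteDimensional ℝ E]
    {H : Type*} [TopologicalSpace H] {I : ModelWithCorners ℝ E H}
    {M : Type*} [TopologicalSpace M] [ChartedSpace H M]
    [T2Space M] [ConnectedSpace M] [I.Boundaryless]
    {E' : Type*} [NormedAddCommGroup E'] [NormedSpace ℝ E'] [FiniteDimensional ℝ E']
    {H' : Type*} [TopologicalSpace H'] {J : ModelWithCorners ℝ E' H'}
    {N : Type*} [TopologicalSpace N] [ChartedSpace H' N]
    (i : M → N) (hi : ContMDiff I J (⊤ : ℕ∞) i)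
    (himm : ∀ x : M, Function.Injective (mfderiv I J i x))
    (f : M ≃ₘ⟮I, I⟯ M) (hf : ∀ x, i (f x) = i x)
    (x₀ : M) (hx₀ : f x₀ = x₀) :
    ∀ x, f x = x := by
  have hloc : IsLocallyInjective i := isLocallyInjective_iff_nhds.mpr fun x =>
    (hi x).exists_mem_nhds_injOn (by simp) (himm x)
  exact congr_fun ((T2Space.isSeparatedMap i).eq_of_comp_eq hloc f.continuous continuous_id
    (funext hf) x₀ hx₀)

/-- If an immersion `i : M → N` of smooth connected manifolds satisfies
`i ∘ f = i` for a diffeomorphism `f` of `M` having a fixed point `x₀`, then `f = id`. -/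
theorem stmt_0
    {E : Type*} [NormedAddCommGroup E] [NormedSpace ℝ E] [FiniteDimensional ℝ E]
    {H : Type*} [TopologicalSpace H] {I : ModelWithCorners ℝ E H}
    {M : Type*} [TopologicalSpace M] [ChartedSpace H M] [IsManifold I (⊤ : ℕ∞) M]
    [T2Space M] [SecondCountableTopology M] [ConnectedSpace M] [I.Boundaryless]
    {E' : Type*} [NormedAddCommGroup E'] [NormedSpace ℝ E'] [FiniteDimensional ℝ E']
    {H' : Type*} [TopologicalSpace H'] {J : ModelWithCorners ℝ E' H'}
    {N : Type*} [TopologicalSpace N] [ChartedSpace H' N] [IsManifold J (⊤ : ℕ∞) N]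
    [T2Space N] [SecondCountableTopology N] [ConnectedSpace N] [J.Boundaryless]
    (hdim : Module.finrank ℝ E ≤ Module.finrank ℝ E')
    (i : M → N) (hi : ContMDiff I J (⊤ : ℕ∞) i)
    (himm : ∀ x : M, Function.Injective (mfderiv I J i x))
    (f : M ≃ₘ⟮I, I⟯ M) (hf : ∀ x, i (f x) = i x)
    (x₀ : M) (hx₀ : f x₀ = x₀) :
    ∀ x, f x = x :=
  stmt_0_general i hi himm f hf x₀ hx₀
end

section
/- Let $i : M \to N$ be an immersion of smooth connected manifolds, and suppose some point of $i(M)$ has exactly one preimage under $i$, i.e., there is $x_0 \in M$ such that $i^{-1}(i(x_0)) = \{x_0\}$. Then $i$ is a free immersion: the only diffeomorphism $f$ of $M$ with $i \circ f = i$ is the identity. -/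
/-!
The set of fixed points of `f` is closed since `M` is Hausdorff, and open since `i ∘ f = i` and an
immersion is locally injective (inverse function theorem in charts). It contains `x₀`, so by
connectedness it is all of `M`.
-/

open Function Set
open scoped Manifold Topology ContDiff

section

variable {𝕜 : Type*} [NontriviallyNormedField 𝕜] [CompleteSpace 𝕜]
  {E : Type*} [NormedAddCommGroup E] [NormedSpace 𝕜 E] [FiniteDimensional 𝕜 E]
  {F : Type*} [NormedAddCommGroup F] [NormedSpace 𝕜 F]

theorem HasStrictFDerivAt.exists_mem_nhds_injOn_s1 {f : E → F} {f' : E →L[𝕜] F} {a : E}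
    (hf : HasStrictFDerivAt f f' a) (hf' : Injective f') : ∃ s ∈ 𝓝 a, InjOn f s := by
  obtain ⟨K, hK, hanti⟩ :=
    (f' : E →ₗ[𝕜] F).exists_antilipschitzWith (LinearMap.ker_eq_bot.2 hf')
  have hc : 0 < K⁻¹ / 2 := by positivity
  obtain ⟨s, hs, happrox⟩ := hf.approximates_deriv_on_nhds (Or.inr hc)
  refine ⟨s, hs, injOn_iff_injective.2 ?_⟩
  -- `f` is its antilipschitz derivative plus a perturbation of Lipschitz constant below `K⁻¹`.
  have hsum := (hanti.domRestrict s).add_lipschitzWith happrox.lipschitz_sub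
    (NNReal.half_lt_self (by positivity))
  convert hsum.injective with x
  simp

end

section

variable {𝕜 : Type*} [RCLike 𝕜]
  {E : Type*} [NormedAddCommGroup E] [NormedSpace 𝕜 E] [FiniteDimensional 𝕜 E]
  {H : Type*} [TopologicalSpace H] {I : ModelWithCorners 𝕜 E H} [I.Boundaryless]
  {M : Type*} [TopologicalSpace M] [ChartedSpace H M]
  {E' : Type*} [NormedAddCommGroup E'] [NormedSpace 𝕜 E']
  {H' : Type*} [TopologicalSpace H'] {J : ModelWithCorners 𝕜 E' H'}
  {N : Type*} [TopologicalSpace N] [ChartedSpace H' N]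
  {n : WithTop ℕ∞} {i : M → N}

theorem ContMDiffAt.exists_mem_nhds_injOn_s1 {x : M} (hi : ContMDiffAt I J n i x) (hn : n ≠ 0)
    (himm : Injective (mfderiv I J i x)) : ∃ U ∈ 𝓝 x, InjOn i U := by
  have hcd : ContDiffAt 𝕜 n (writtenInExtChartAt I J x i) (extChartAt I x x) := by
    have := (contMDiffAt_iff.1 hi).2
    rwa [I.range_eq_univ, contDiffWithinAt_univ] at this
  have hderiv : fderiv 𝕜 (writtenInExtChartAt I J x i) (extChartAt I x x) = mfderiv I J i x := by
    rw [(hi.mdifferentiableAt hn).mfderiv, I.range_eq_univ, fderivWithin_univ]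
  obtain ⟨s, hs, hinj⟩ :=
    (hcd.hasStrictFDerivAt hn).exists_mem_nhds_injOn_s1 (hderiv ▸ himm)
  refine ⟨(extChartAt I x).source ∩ extChartAt I x ⁻¹' s,
    Filter.inter_mem (extChartAt_source_mem_nhds x)
      ((continuousAt_extChartAt x).preimage_mem_nhds hs), ?_⟩
  rintro a ⟨ha, has⟩ b ⟨hb, hbs⟩ hab
  refine (extChartAt I x).injOn ha hb (hinj has hbs ?_)
  simp only [writtenInExtChartAt, comp_apply, (extChartAt I x).left_inv ha,
    (extChartAt I x).left_inv hb, hab]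

theorem ContMDiff.isLocallyInjective (hi : ContMDiff I J n i) (hn : n ≠ 0)
    (himm : ∀ x, Injective (mfderiv I J i x)) : IsLocallyInjective i :=
  isLocallyInjective_iff_nhds.2 fun x ↦ (hi x).exists_mem_nhds_injOn_s1 hn (himm x)

end

theorem stmt_1_general
    {E : Type*} [NormedAddCommGroup E] [NormedSpace ℝ E] [FiniteDimensional ℝ E]
    {H : Type*} [TopologicalSpace H] {I : ModelWithCorners ℝ E H}
    {M : Type*} [TopologicalSpace M] [ChartedSpace H M]
    [T2Space M] [ConnectedSpace M] [I.Boundaryless]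
    {E' : Type*} [NormedAddCommGroup E'] [NormedSpace ℝ E']
    {H' : Type*} [TopologicalSpace H'] {J : ModelWithCorners ℝ E' H'}
    {N : Type*} [TopologicalSpace N] [ChartedSpace H' N]
    (i : M → N) (hi : ContMDiff I J (⊤ : ℕ∞) i)
    (himm : ∀ x : M, Function.Injective (mfderiv I J i x))
    (x₀ : M) (hx₀ : ∀ x, i x = i x₀ → x = x₀) :
    ∀ f : M ≃ₘ⟮I, I⟯ M, (∀ x, i (f x) = i x) → ∀ x, f x = x := by
  intro f hf
  have hloc : IsLocallyInjective i := hi.isLocallyInjective (by simp) himm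
  exact congr_fun <| (T2Space.isSeparatedMap i).eq_of_comp_eq hloc f.continuous continuous_id
    (funext hf) x₀ (hx₀ _ (hf x₀))

/-- If an immersion `i : M → N` has a point of its image with exactly one
preimage, then `i` is a free immersion: any diffeomorphism `f` with `i ∘ f = i` is the
identity. -/
theorem stmt_1
    {E : Type*} [NormedAddCommGroup E] [NormedSpace ℝ E] [FiniteDimensional ℝ E]
    {H : Type*} [TopologicalSpace H] {I : ModelWithCorners ℝ E H}
    {M : Type*} [TopologicalSpace M] [ChartedSpace H M] [IsManifold I (⊤ : ℕ∞) M]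
    [T2Space M] [SecondCountableTopology M] [ConnectedSpace M] [I.Boundaryless]
    {E' : Type*} [NormedAddCommGroup E'] [NormedSpace ℝ E'] [FiniteDimensional ℝ E']
    {H' : Type*} [TopologicalSpace H'] {J : ModelWithCorners ℝ E' H'}
    {N : Type*} [TopologicalSpace N] [ChartedSpace H' N] [IsManifold J (⊤ : ℕ∞) N]
    [T2Space N] [SecondCountableTopology N] [ConnectedSpace N] [J.Boundaryless]
    (hdim : Module.finrank ℝ E ≤ Module.finrank ℝ E')
    (i : M → N) (hi : ContMDiff I J (⊤ : ℕ∞) i)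
    (himm : ∀ x : M, Function.Injective (mfderiv I J i x))
    (x₀ : M) (hx₀ : ∀ x, i x = i x₀ → x = x₀) :
    ∀ f : M ≃ₘ⟮I, I⟯ M, (∀ x, i (f x) = i x) → ∀ x, f x = x :=
  stmt_1_general i hi himm x₀ hx₀
end

section
/- Let $i : M \to N$ be an immersion of smooth connected manifolds, let $f$ be a diffeomorphism of $M$ with $i \circ f = i$, and let $U \subseteq M$ be a connected open set on which $i$ restricts to an injective map. Then either $f(U) \cap U = \emptyset$ or $f(x) = x$ for all $x \in U$ (equivalently $f(U) = U$ and $f|_U = \mathrm{id}$). -/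
open Function Set
open scoped Manifold Topology

/-!
If `g ∘ f = g` and `g` is injective on `U`, then a point `x ∈ U` with `f x ∈ U` is fixed by
`f`. Hence the fixed points of `f` in `U` are exactly `U ∩ f⁻¹(U)`, which is relatively open in `U`;
they are also relatively closed since `X` is Hausdorff. If `f(U)` meets `U`, this set is
nonempty, so on the preconnected set `U` it is all of `U`.
-/

section FixedPoints

variable {X Y : Type*} {f : X → X} {g : X → Y} {U : Set X}

theorem Set.InjOn.apply_eq_self_of_comp_eq (hinj : InjOn g U) (hgf : ∀ x, g (f x) = g x)
    {x : X} (hx : x ∈ U) (hfx : f x ∈ U) : f x = x :=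
  hinj hfx hx (hgf x)

theorem IsPreconnected.eqOn_id_of_injOn_of_comp_eq [TopologicalSpace X] [T2Space X]
    (hf : Continuous f) (hgf : ∀ x, g (f x) = g x) (hUo : IsOpen U) (hU : IsPreconnected U)
    (hinj : InjOn g U) (hmeet : (f '' U ∩ U).Nonempty) : EqOn f id U := by
  obtain ⟨_, ⟨x₀, hx₀, rfl⟩, hfx₀⟩ := hmeet
  have hsub : U ⊆ U ∩ f ⁻¹' U := by
    refine hU.subset_of_closure_inter_subset (hUo.inter (hUo.preimage hf))
      ⟨x₀, hx₀, hx₀, hfx₀⟩ ?_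
    rintro x ⟨hxcl, hx⟩
    have hfix : closure (U ∩ f ⁻¹' U) ⊆ fixedPoints f :=
      (isClosed_fixedPoints hf).closure_subset_iff.mpr
        fun y ⟨hy, hfy⟩ ↦ hinj.apply_eq_self_of_comp_eq hgf hy hfy
    have hfx : f x = x := hfix hxcl
    exact ⟨hx, by rwa [mem_preimage, hfx]⟩
  exact fun x hx ↦ hinj.apply_eq_self_of_comp_eq hgf hx (hsub hx).2

end FixedPoints

theorem stmt_2_general
    {E : Type*} [NormedAddCommGroup E] [NormedSpace ℝ E]
    {H : Type*} [TopologicalSpace H] {I : ModelWithCorners ℝ E H}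
    {M : Type*} [TopologicalSpace M] [ChartedSpace H M]
    [T2Space M]
    {N : Type*}
    (i : M → N)
    (f : Diffeomorph I I M M (⊤ : ℕ∞)) (hf : ∀ x, i (f x) = i x)
    (U : Set M) (hUopen : IsOpen U) (hUconn : IsConnected U) (hUinj : Set.InjOn i U) :
    (f '' U) ∩ U = ∅ ∨ (f '' U = U ∧ ∀ x ∈ U, f x = x) := by
  rcases eq_empty_or_nonempty ((f '' U) ∩ U) with hdisj | hmeet
  · exact Or.inl hdisj
  · have hid : EqOn f id U := hUconn.isPreconnected.eqOn_id_of_injOn_of_comp_eq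
      f.continuous hf hUopen hUinj hmeet
    exact Or.inr ⟨hid.image_eq_self, hid⟩

/-- If `f` is a diffeomorphism fixing the immersion `i` (`i ∘ f = i`) and
`U` is a connected open set on which `i` is injective, then either `f(U) ∩ U = ∅` or
`f` is the identity on `U` (and `f(U) = U`). -/
theorem stmt_2
    {E : Type*} [NormedAddCommGroup E] [NormedSpace ℝ E] [FiniteDimensional ℝ E]
    {H : Type*} [TopologicalSpace H] {I : ModelWithCorners ℝ E H}
    {M : Type*} [TopologicalSpace M] [ChartedSpace H M] [IsManifold I (⊤ : ℕ∞) M]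
    [T2Space M] [SecondCountableTopology M] [ConnectedSpace M] [I.Boundaryless]
    {E' : Type*} [NormedAddCommGroup E'] [NormedSpace ℝ E'] [FiniteDimensional ℝ E']
    {H' : Type*} [TopologicalSpace H'] {J : ModelWithCorners ℝ E' H'}
    {N : Type*} [TopologicalSpace N] [ChartedSpace H' N] [IsManifold J (⊤ : ℕ∞) N]
    [T2Space N] [SecondCountableTopology N] [ConnectedSpace N] [J.Boundaryless]
    (hdim : Module.finrank ℝ E ≤ Module.finrank ℝ E')
    (i : M → N) (hi : ContMDiff I J (⊤ : ℕ∞) i)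
    (himm : ∀ x : M, Function.Injective (mfderiv I J i x))
    (f : Diffeomorph I I M M (⊤ : ℕ∞)) (hf : ∀ x, i (f x) = i x)
    (U : Set M) (hUopen : IsOpen U) (hUconn : IsConnected U) (hUinj : Set.InjOn i U) :
    (f '' U) ∩ U = ∅ ∨ (f '' U = U ∧ ∀ x ∈ U, f x = x) :=
  stmt_2_general i f hf U hUopen hUconn hUinj
end

section
/- There exists a free immersion $i : S^1 \to \mathbb{R}^2$ such that every point of $i(S^1)$ has at least two preimages. (For example, traversing one circle of a figure eight three times and the other circle twice yields such an immersion.) -/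
open Function Set Metric
open scoped Manifold Topology ContDiff

local notation "𝕊¹" => Metric.sphere (0 : EuclideanSpace ℝ (Fin 2)) 1

/-!
The immersion is `e^{iθ} ↦ (1 - cos 5θ + bulge θ, sin 5θ)`. It runs five times around the circle of
radius `1` centred at `(1, 0)`, except that a smooth bump `bulge`, supported near `θ = π/5` and
`θ = 3π/5`, pushes the first two of the five loops outward near `(2, 0)`. So one closed curve is
traversed twice and another three times, and every point has at least two preimages.

The bulge only acts where `cos 5θ < 0`, so two points have the same image only if their angles
differ by a multiple of `2π/5`. A continuous `f` with `i ∘ f = i` therefore moves every point by one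
of five rotations, hence, the circle being connected, by a single one; and no nonzero translation of
`ℤ/5` preserves the set `{0, 1}` of bulged loops. Immersivity: the second coordinate has derivative
`5 cos 5θ`, and where this vanishes the bulge is locally zero, so the first coordinate has derivative
`5 sin 5θ = ±5`.
-/

open Real Module

namespace CircleImmersion

local notation "ℝ²" => EuclideanSpace ℝ (Fin 2)

lemma cos_le_cos_of_mem_Icc {δ t : ℝ} (hδ : 0 ≤ δ) (h₁ : δ ≤ t) (h₂ : t ≤ 2 * π - δ) :
    cos t ≤ cos δ := by
  rcases le_total t π with h | h
  · exact cos_le_cos_of_nonneg_of_le_pi hδ h h₁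
  · rw [← cos_two_pi_sub]
    exact cos_le_cos_of_nonneg_of_le_pi hδ (by linarith) (by linarith)

lemma abs_sin_le_sin_of_cos_lt_cos {δ t : ℝ} (hδ : δ ∈ Icc 0 (π / 2)) (ht : cos δ < cos t) :
    |sin t| ≤ sin δ := by
  have hcδ : 0 ≤ cos δ := cos_nonneg_of_mem_Icc ⟨by linarith [hδ.1, pi_pos], hδ.2⟩
  refine abs_le_of_sq_le_sq ?_ (sin_nonneg_of_nonneg_of_le_pi hδ.1 (by linarith [hδ.2, pi_pos]))
  nlinarith [sin_sq_add_cos_sq t, sin_sq_add_cos_sq δ]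

lemma cos_add_lt_cos_add {δ ε t u : ℝ} (hδ : δ ∈ Icc 0 (π / 2)) (hε : ε ∈ Icc 0 (π / 2))
    (ht : cos δ < cos t) (hu : cos ε < cos u) : cos (δ + ε) < cos (t + u) := by
  have hcδ : 0 ≤ cos δ := cos_nonneg_of_mem_Icc ⟨by linarith [hδ.1, pi_pos], hδ.2⟩
  have hcε : 0 ≤ cos ε := cos_nonneg_of_mem_Icc ⟨by linarith [hε.1, pi_pos], hε.2⟩
  have hsin : sin t * sin u ≤ sin δ * sin ε := by
    calc sin t * sin u ≤ |sin t| * |sin u| := by rw [← abs_mul]; exact le_abs_self _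
      _ ≤ sin δ * sin ε := mul_le_mul (abs_sin_le_sin_of_cos_lt_cos hδ ht)
          (abs_sin_le_sin_of_cos_lt_cos hε hu) (abs_nonneg _) ((abs_nonneg _).trans
          (abs_sin_le_sin_of_cos_lt_cos hδ ht))
  rw [cos_add, cos_add]
  linarith [mul_lt_mul'' ht hu hcδ hcε]

lemma cos_nat_mul_lt_cos_nat_mul {δ t : ℝ} {n : ℕ} (hn : 1 ≤ n) (hδ : 0 ≤ δ)
    (hnδ : n * δ ≤ π / 2) (ht : cos δ < cos t) : cos (n * δ) < cos (n * t) := by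
  induction n, hn using Nat.le_induction with
  | base => simpa using ht
  | succ n hn ih =>
    push_cast at hnδ ⊢
    have hnδ' : n * δ ≤ π / 2 := by nlinarith
    rw [add_mul, add_mul, one_mul, one_mul]
    exact cos_add_lt_cos_add ⟨by positivity, hnδ'⟩ ⟨hδ, by nlinarith⟩ (ih hnδ') ht

lemma exists_eq_add_int_mul_two_pi {a b : ℝ} (hc : cos a = cos b) (hs : sin a = sin b) :
    ∃ n : ℤ, b = a + n * (2 * π) := by
  obtain ⟨n, hn⟩ := Real.Angle.angle_eq_iff_two_pi_dvd_sub.mp (Real.Angle.cos_sin_inj hc hs)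
  exact ⟨-n, by push_cast; linarith⟩

instance : Fact (finrank ℝ ℝ² = 1 + 1) := ⟨finrank_euclideanSpace_fin⟩

lemma circ_mem_sphere (θ : ℝ) : !₂[cos θ, sin θ] ∈ 𝕊¹ := by
  simp [EuclideanSpace.norm_eq]

noncomputable def circ (θ : ℝ) : 𝕊¹ := ⟨!₂[cos θ, sin θ], circ_mem_sphere θ⟩

@[simp] lemma coe_circ (θ : ℝ) : (circ θ : ℝ²) = !₂[cos θ, sin θ] := rfl

lemma circ_add_int_mul_two_pi (θ : ℝ) (n : ℤ) : circ (θ + n * (2 * π)) = circ θ := by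
  ext i; fin_cases i <;> simp

lemma circ_add_ne {θ a : ℝ} (h₀ : 0 < a) (h₂ : a < 2 * π) : circ (θ + a) ≠ circ θ := by
  intro h
  have hc := congrArg (fun x : 𝕊¹ => (x : ℝ²) 0) h
  have hs := congrArg (fun x : 𝕊¹ => (x : ℝ²) 1) h
  simp only [coe_circ] at hc hs
  obtain ⟨n, hn⟩ := exists_eq_add_int_mul_two_pi hc hs
  have h1 : (0 : ℝ) < -n := by nlinarith [pi_pos]
  have h2 : (-n : ℝ) < 1 := by nlinarith [pi_pos]
  have : (0 : ℤ) < -n := by exact_mod_cast h1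
  have : (-n : ℤ) < 1 := by exact_mod_cast h2
  omega

lemma exists_circ_eq (x : 𝕊¹) : ∃ θ, circ θ = x := by
  obtain ⟨v, hv⟩ := x
  set z : ℂ := ⟨v 0, v 1⟩
  have hz : ‖z‖ = 1 := by
    rw [mem_sphere_zero_iff_norm, EuclideanSpace.norm_eq, Fin.sum_univ_two] at hv
    simpa [Complex.norm_eq_sqrt_sq_add_sq, z] using hv
  have hz0 : z ≠ 0 := norm_ne_zero_iff.mp (by rw [hz]; exact one_ne_zero)
  refine ⟨z.arg, Subtype.ext ?_⟩
  ext i; fin_cases i <;> simp [Complex.cos_arg hz0, Complex.sin_arg, hz, z]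

lemma contDiff_coe_circ : ContDiff ℝ ∞ (fun θ => (circ θ : ℝ²)) := by
  rw [contDiff_euclidean]
  intro i
  fin_cases i <;> simp only [Fin.zero_eta, Fin.mk_one, coe_circ, Matrix.cons_val_zero,
    Matrix.cons_val_one, Matrix.cons_val_fin_one] <;> fun_prop

lemma contMDiff_circ : ContMDiff 𝓘(ℝ) (𝓡 1) ∞ circ :=
  contDiff_coe_circ.contMDiff.codRestrict_sphere circ_mem_sphere

lemma continuous_circ : Continuous circ := contMDiff_circ.continuous

noncomputable def rotate (θ : ℝ) (v : ℝ²) : ℝ² :=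
  !₂[cos θ * v 0 - sin θ * v 1, sin θ * v 0 + cos θ * v 1]

lemma rotate_circ (θ α : ℝ) : rotate θ (circ α) = circ (θ + α) := by
  ext i; fin_cases i <;> simp [rotate, cos_add, sin_add]

lemma continuous_rotate {X : Type*} [TopologicalSpace X] {f : X → ℝ} {g : X → ℝ²}
    (hf : Continuous f) (hg : Continuous g) : Continuous fun x => rotate (f x) (g x) := by
  refine (PiLp.continuous_toLp 2 _).comp (continuous_pi fun i => ?_)
  fin_cases i <;> simp only [Fin.zero_eta, Fin.mk_one, Matrix.cons_val_zero,
    Matrix.cons_val_one, Matrix.cons_val_fin_one] <;> fun_prop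

lemma exists_forall_eq_circ_add {f : 𝕊¹ → 𝕊¹} (hf : Continuous f) {A : Finset ℝ}
    (h : ∀ θ, ∃ α ∈ A, f (circ θ) = circ (θ + α)) : ∃ α ∈ A, ∀ θ, f (circ θ) = circ (θ + α) := by
  -- Rotating `f (circ θ)` back by `θ` gives a continuous map from `ℝ` into a finite set.
  have hg : Continuous fun θ => rotate (-θ) (f (circ θ)) :=
    continuous_rotate continuous_neg (continuous_subtype_val.comp (hf.comp continuous_circ))
  have hmaps : MapsTo (fun θ => rotate (-θ) (f (circ θ))) univ
      (A.image fun α => (circ α : ℝ²) : Set ℝ²) := by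
    intro θ _
    obtain ⟨α, hα, hfα⟩ := h θ
    simp only [Finset.coe_image, hfα, rotate_circ, neg_add_cancel_left]
    exact mem_image_of_mem _ hα
  obtain ⟨α, hα, hα₀⟩ := h 0
  refine ⟨α, hα, fun θ => ?_⟩
  obtain ⟨β, -, hβ⟩ := h θ
  have hconst := isPreconnected_univ.constant_of_mapsTo (Finset.finite_toSet _).isDiscrete
    hg.continuousOn hmaps (mem_univ θ) (mem_univ 0)
  simp only [hβ, hα₀, rotate_circ, neg_add_cancel_left, neg_zero, zero_add] at hconst
  rw [hβ]
  ext1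
  rw [← rotate_circ, hconst, rotate_circ]

/-- `glue (cos t)` is a smooth bump, positive exactly when `t` is within `π / 50` of `2πℤ`. -/
noncomputable def glue (y : ℝ) : ℝ := expNegInvGlue (y - cos (π / 50))

@[fun_prop] lemma contDiff_glue : ContDiff ℝ ∞ glue :=
  expNegInvGlue.contDiff.comp (contDiff_id.sub contDiff_const)

lemma glue_nonneg (y : ℝ) : 0 ≤ glue y := expNegInvGlue.nonneg _

lemma glue_one_pos : 0 < glue 1 := by
  have hπ := pi_pos
  have : cos (π / 50) < cos 0 := cos_lt_cos_of_nonneg_of_le_pi le_rfl (by linarith) (by positivity)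
  exact expNegInvGlue.pos_of_pos (by rw [cos_zero] at this; linarith)

lemma cos_lt_of_glue_ne_zero {y : ℝ} (h : glue y ≠ 0) : cos (π / 50) < y := by
  by_contra! hy
  exact h (expNegInvGlue.zero_of_nonpos (by linarith))

lemma glue_cos_eq_zero {t : ℝ} (h₁ : π / 50 ≤ t) (h₂ : t ≤ 2 * π - π / 50) : glue (cos t) = 0 :=
  expNegInvGlue.zero_of_nonpos (by linarith [cos_le_cos_of_mem_Icc (by positivity) h₁ h₂])

lemma glue_cos_eq_zero_or {s t : ℝ} (h₁ : π / 25 ≤ s - t) (h₂ : s - t ≤ 2 * π - π / 25) :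
    glue (cos s) = 0 ∨ glue (cos t) = 0 := by
  have hπ := pi_pos
  by_contra! h
  have hδ : π / 50 ∈ Icc 0 (π / 2) := ⟨by positivity, by linarith⟩
  have hlt := cos_add_lt_cos_add hδ hδ (cos_lt_of_glue_ne_zero h.1)
    (by rw [cos_neg]; exact cos_lt_of_glue_ne_zero h.2)
  rw [← sub_eq_add_neg, show π / 50 + π / 50 = π / 25 by ring] at hlt
  linarith [cos_le_cos_of_mem_Icc (by positivity) h₁ h₂]

noncomputable def bulge (θ : ℝ) : ℝ := glue (cos (θ - π / 5)) + glue (cos (θ - 3 * π / 5))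

lemma bulge_nonneg (θ : ℝ) : 0 ≤ bulge θ := add_nonneg (glue_nonneg _) (glue_nonneg _)

lemma cos_pi_div_ten_pos : 0 < cos (π / 10) :=
  cos_pos_of_mem_Ioo ⟨by linarith [pi_pos], by linarith [pi_pos]⟩

lemma bulge_eq_zero_of_cos_gt {θ : ℝ} (h : -cos (π / 10) < cos (5 * θ)) : bulge θ = 0 := by
  have hπ := pi_pos
  have key : ∀ α, cos (5 * α) = -1 → glue (cos (θ - α)) = 0 := by
    intro α hα
    by_contra hne
    have h5 := cos_nat_mul_lt_cos_nat_mul (n := 5) (by norm_num) (by positivity) (by linarith)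
      (cos_lt_of_glue_ne_zero hne)
    have hsin : sin (5 * α) = 0 := by nlinarith [sin_sq_add_cos_sq (5 * α)]
    push_cast at h5
    rw [mul_sub, cos_sub, hα, hsin, show 5 * (π / 50) = π / 10 by ring] at h5
    linarith
  rw [bulge, key _ (by rw [show 5 * (π / 5) = π by ring, cos_pi]),
    key _ (by rw [show 5 * (3 * π / 5) = π + 2 * π by ring, cos_add_two_pi, cos_pi]), add_zero]

lemma bulge_eq_zero_of_mem_Icc {θ : ℝ} (h : θ ∈ Icc (4 * π / 5) (2 * π)) : bulge θ = 0 := by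
  have hπ := pi_pos
  rw [bulge, glue_cos_eq_zero, glue_cos_eq_zero, add_zero] <;> linarith [h.1, h.2]

lemma bulge_pi_div_five_pos : 0 < bulge (π / 5) := by
  rw [bulge, sub_self, cos_zero]
  exact add_pos_of_pos_of_nonneg glue_one_pos (glue_nonneg _)

lemma bulge_three_pi_div_five_pos : 0 < bulge (3 * π / 5) := by
  rw [bulge, sub_self, cos_zero]
  exact add_pos_of_nonneg_of_pos (glue_nonneg _) glue_one_pos

lemma bulge_add_or_sub (θ : ℝ) :
    bulge (θ + 2 * π / 5) = bulge θ ∨ bulge (θ - 2 * π / 5) = bulge θ := by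
  have hπ := pi_pos
  rw [bulge, bulge, bulge, show θ + 2 * π / 5 - π / 5 = θ + π / 5 by ring,
    show θ + 2 * π / 5 - 3 * π / 5 = θ - π / 5 by ring,
    show θ - 2 * π / 5 - π / 5 = θ - 3 * π / 5 by ring,
    show θ - 2 * π / 5 - 3 * π / 5 = θ - π by ring]
  have had := glue_cos_eq_zero_or (s := θ + π / 5) (t := θ - π) (by linarith) (by linarith)
  have hab := glue_cos_eq_zero_or (s := θ + π / 5) (t := θ - π / 5) (by linarith) (by linarith)
  have hcd := glue_cos_eq_zero_or (s := θ - 3 * π / 5) (t := θ - π) (by linarith) (by linarith)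
  have hbc := glue_cos_eq_zero_or (s := θ - π / 5) (t := θ - 3 * π / 5) (by linarith) (by linarith)
  rcases (by tauto : (glue (cos (θ + π / 5)) = 0 ∧ glue (cos (θ - 3 * π / 5)) = 0) ∨
      (glue (cos (θ - π)) = 0 ∧ glue (cos (θ - π / 5)) = 0)) with ⟨ha, hc⟩ | ⟨hd, hb⟩
  · left; rw [ha, hc, zero_add, add_zero]
  · right; rw [hd, hb, add_zero, zero_add]

/-- The two polynomials are the real and imaginary parts of `(v 0 + i v 1) ^ 5`, so that on the unit
circle this is `e^{iθ} ↦ (1 - cos 5θ + bulge θ, sin 5θ)` (see `immersion_circ`). -/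
noncomputable def planeMap (v : ℝ²) : ℝ² :=
  !₂[1 - (v 0 ^ 5 - 10 * v 0 ^ 3 * v 1 ^ 2 + 5 * v 0 * v 1 ^ 4)
      + glue (v 0 * cos (π / 5) + v 1 * sin (π / 5))
      + glue (v 0 * cos (3 * π / 5) + v 1 * sin (3 * π / 5)),
    5 * v 0 ^ 4 * v 1 - 10 * v 0 ^ 2 * v 1 ^ 3 + v 1 ^ 5]

noncomputable def immersion (x : 𝕊¹) : ℝ² := planeMap x

lemma immersion_circ (θ : ℝ) :
    immersion (circ θ) = !₂[1 - cos (5 * θ) + bulge θ, sin (5 * θ)] := by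
  have h5 : 5 * θ = θ + θ + θ + θ + θ := by ring
  ext i; fin_cases i <;> simp [immersion, planeMap, bulge, cos_sub, h5, cos_add, sin_add] <;> ring

lemma immersion_circ_eq_iff {θ θ' : ℝ} :
    immersion (circ θ) = immersion (circ θ') ↔
      cos (5 * θ) = cos (5 * θ') ∧ sin (5 * θ) = sin (5 * θ') ∧ bulge θ = bulge θ' := by
  rw [immersion_circ, immersion_circ]
  refine ⟨fun h => ?_, fun ⟨hc, hs, hb⟩ => by rw [hc, hs, hb]⟩
  have h₀ := congrArg (· 0) h
  have h₁ := congrArg (· 1) h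
  simp only [Matrix.cons_val_zero, Matrix.cons_val_one] at h₀ h₁
  -- The bulge lives where `cos 5θ < 0`, so it cannot carry a point across the line `x = 1`.
  have hflat : ∀ φ, 0 ≤ cos (5 * φ) → bulge φ = 0 := fun φ hφ =>
    bulge_eq_zero_of_cos_gt (by linarith [cos_pi_div_ten_pos])
  have hsq : cos (5 * θ) ^ 2 = cos (5 * θ') ^ 2 := by
    linarith [sin_sq_add_cos_sq (5 * θ), sin_sq_add_cos_sq (5 * θ'), congrArg (· ^ 2) h₁]
  have hc : cos (5 * θ) = cos (5 * θ') := by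
    have := bulge_nonneg θ
    have := bulge_nonneg θ'
    rcases le_or_gt 0 (cos (5 * θ)) with hθ | hθ <;> rcases le_or_gt 0 (cos (5 * θ')) with hθ' | hθ'
    · linarith [hflat θ hθ, hflat θ' hθ']
    · linarith [hflat θ hθ]
    · linarith [hflat θ' hθ']
    · nlinarith
  exact ⟨hc, h₁, by linarith⟩

lemma contDiff_planeMap : ContDiff ℝ ∞ planeMap := by
  rw [contDiff_euclidean]
  intro i
  fin_cases i <;> simp only [planeMap, Fin.zero_eta, Fin.mk_one, Matrix.cons_val_zero,
    Matrix.cons_val_one, Matrix.cons_val_fin_one] <;> fun_prop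

lemma contMDiff_immersion : ContMDiff (𝓡 1) 𝓘(ℝ, ℝ²) ∞ immersion :=
  contDiff_planeMap.contMDiff.comp contMDiff_coe_sphere

lemma hasDerivAt_euclideanSpace_apply {ι : Type*} [Fintype ι] {γ : ℝ → EuclideanSpace ℝ ι}
    {D : EuclideanSpace ℝ ι} {θ : ℝ} (h : HasDerivAt γ D θ) (i : ι) :
    HasDerivAt (fun s => γ s i) (D i) θ :=
  (EuclideanSpace.proj (𝕜 := ℝ) i).hasFDerivAt.comp_hasDerivAt θ h

lemma deriv_immersion_circ_ne_zero (θ : ℝ) : deriv (fun s => immersion (circ s)) θ ≠ 0 := by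
  intro h0
  have hd : HasDerivAt (fun s => immersion (circ s)) 0 θ := h0 ▸
    ((contDiff_planeMap.comp contDiff_coe_circ).differentiable (by simp)).differentiableAt.hasDerivAt
  simp only [immersion_circ] at hd
  have hmul : HasDerivAt (fun s : ℝ => 5 * s) 5 θ := by simpa using (hasDerivAt_id θ).const_mul 5
  have hcos : cos (5 * θ) = 0 := by
    simpa using ((hasDerivAt_euclideanSpace_apply hd 1).unique hmul.sin).symm
  have hflat : bulge =ᶠ[𝓝 θ] 0 := by
    have hc : Continuous fun s => cos (5 * s) := by fun_prop
    have hlt : -cos (π / 10) < cos (5 * θ) := by rw [hcos, neg_lt_zero]; exact cos_pi_div_ten_pos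
    filter_upwards [hc.continuousAt.eventually (lt_mem_nhds hlt)] with s hs
    exact bulge_eq_zero_of_cos_gt hs
  have h₀ := (hasDerivAt_euclideanSpace_apply hd 0).congr_of_eventuallyEq
    (hflat.mono fun s hs => by simp [hs] : (fun s => 1 - cos (5 * s)) =ᶠ[𝓝 θ] _)
  have hsin : sin (5 * θ) = 0 := by simpa using (h₀.unique (hmul.cos.const_sub 1)).symm
  nlinarith [sin_sq_add_cos_sq (5 * θ)]

lemma injective_of_finrank_eq_one {K V W : Type*} [Field K] [AddCommGroup V] [Module K V]
    [AddCommGroup W] [Module K W] {L : V →ₗ[K] W} (hV : finrank K V = 1) {v : V} (hv : L v ≠ 0) :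
    Injective L := by
  refine (injective_iff_map_eq_zero L).mpr fun w hw => ?_
  obtain ⟨c, rfl⟩ := (finrank_eq_one_iff_of_nonzero' v (by rintro rfl; simp at hv)).mp hV w
  rw [map_smul, smul_eq_zero] at hw
  simp [hw.resolve_right hv]

lemma injective_mfderiv_immersion (x : 𝕊¹) : Injective (mfderiv (𝓡 1) 𝓘(ℝ, ℝ²) immersion x) := by
  obtain ⟨θ, rfl⟩ := exists_circ_eq x
  have hchain : mfderiv (𝓡 1) 𝓘(ℝ, ℝ²) immersion (circ θ) (mfderiv 𝓘(ℝ) (𝓡 1) circ θ 1) =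
      deriv (fun s => immersion (circ s)) θ := by
    rw [← mfderiv_comp_apply θ (contMDiff_immersion.mdifferentiableAt (by simp))
      (contMDiff_circ.mdifferentiableAt (by simp)), mfderiv_eq_fderiv]
    rfl
  exact injective_of_finrank_eq_one (L := (mfderiv (𝓡 1) 𝓘(ℝ, ℝ²) immersion (circ θ)).toLinearMap)
    finrank_euclideanSpace_fin (hchain ▸ deriv_immersion_circ_ne_zero θ)

lemma eq_zero_of_forall_bulge_add_eq {k : ℤ} (hk : k ∈ Finset.Ico 0 5)
    (h : ∀ θ, bulge (θ + k * (2 * π / 5)) = bulge θ) : k = 0 := by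
  have hπ := pi_pos
  obtain ⟨hk₀, hk₅⟩ := Finset.mem_Ico.mp hk
  -- `k = 1` moves the bulged loop around `3π/5` onto a round one; `k = 2, 3, 4` do so for `π/5`.
  interval_cases k
  · rfl
  · exact absurd ((h _).symm.trans (bulge_eq_zero_of_mem_Icc ⟨by push_cast; linarith,
      by push_cast; linarith⟩)) bulge_three_pi_div_five_pos.ne'
  all_goals exact absurd ((h (π / 5)).symm.trans (bulge_eq_zero_of_mem_Icc ⟨by push_cast; linarith,
      by push_cast; linarith⟩)) bulge_pi_div_five_pos.ne'

lemma eq_of_immersion_comp_eq {f : 𝕊¹ → 𝕊¹} (hf : Continuous f)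
    (hfi : ∀ x, immersion (f x) = immersion x) (x : 𝕊¹) : f x = x := by
  have hstep : ∀ θ, ∃ α ∈ (Finset.Ico (0 : ℤ) 5).image (fun k : ℤ => k * (2 * π / 5)),
      f (circ θ) = circ (θ + α) := by
    intro θ
    obtain ⟨θ', hθ'⟩ := exists_circ_eq (f (circ θ))
    obtain ⟨hc, hs, -⟩ := immersion_circ_eq_iff.mp (hθ' ▸ hfi (circ θ))
    obtain ⟨m, hm⟩ := exists_eq_add_int_mul_two_pi hc.symm hs.symm
    refine ⟨(m % 5 : ℤ) * (2 * π / 5), Finset.mem_image_of_mem _ (Finset.mem_Ico.mpr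
      ⟨Int.emod_nonneg _ (by norm_num), Int.emod_lt_of_pos _ (by norm_num)⟩), ?_⟩
    have hdiv : (m : ℝ) = (m % 5 : ℤ) + 5 * (m / 5 : ℤ) := by
      exact_mod_cast (Int.emod_add_mul_ediv m 5).symm
    rw [← hθ', ← circ_add_int_mul_two_pi (θ + _) (m / 5)]
    congr 1
    linear_combination hm / 5 + (2 * π / 5) * hdiv
  obtain ⟨α, hα, hrot⟩ := exists_forall_eq_circ_add hf hstep
  obtain ⟨k, hk, rfl⟩ := Finset.mem_image.mp hα
  have hk₀ : k = 0 := eq_zero_of_forall_bulge_add_eq hk fun θ =>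
    (immersion_circ_eq_iff.mp (hrot θ ▸ hfi (circ θ))).2.2
  obtain ⟨θ, rfl⟩ := exists_circ_eq x
  simp [hrot, hk₀]

lemma exists_ne_immersion_eq (x : 𝕊¹) : ∃ x' ≠ x, immersion x' = immersion x := by
  have hπ := pi_pos
  obtain ⟨θ, rfl⟩ := exists_circ_eq x
  have h2π : 5 * (2 * π / 5) = 2 * π := by ring
  rcases bulge_add_or_sub θ with h | h
  · refine ⟨circ (θ + 2 * π / 5), circ_add_ne (by positivity) (by linarith),
      immersion_circ_eq_iff.mpr ⟨?_, ?_, h⟩⟩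
    · rw [mul_add, h2π, cos_add_two_pi]
    · rw [mul_add, h2π, sin_add_two_pi]
  · refine ⟨circ (θ - 2 * π / 5), fun h' => circ_add_ne (θ := θ - 2 * π / 5) (a := 2 * π / 5)
      (by positivity) (by linarith) (by rw [sub_add_cancel, h']),
      immersion_circ_eq_iff.mpr ⟨?_, ?_, h⟩⟩
    · rw [mul_sub, h2π, cos_sub_two_pi]
    · rw [mul_sub, h2π, sin_sub_two_pi]

end CircleImmersion

/-- There exists a free immersion `i : S¹ → ℝ²` such that every point of the
image has at least two preimages (e.g. going three times around one circle of a figure eight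
and twice around the other). -/
theorem stmt_3 :
    ∃ i : 𝕊¹ → EuclideanSpace ℝ (Fin 2),
      ContMDiff (𝓡 1) 𝓘(ℝ, EuclideanSpace ℝ (Fin 2)) (⊤ : ℕ∞) i ∧
      (∀ x : 𝕊¹, Function.Injective (mfderiv (𝓡 1) 𝓘(ℝ, EuclideanSpace ℝ (Fin 2)) i x)) ∧
      (∀ f : 𝕊¹ ≃ₘ⟮𝓡 1, 𝓡 1⟯ 𝕊¹, (∀ x, i (f x) = i x) → ∀ x, f x = x) ∧
      (∀ x : 𝕊¹, ∃ x' : 𝕊¹, x' ≠ x ∧ i x' = i x) :=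
  ⟨CircleImmersion.immersion, CircleImmersion.contMDiff_immersion,
    CircleImmersion.injective_mfderiv_immersion,
    fun f hf => CircleImmersion.eq_of_immersion_comp_eq f.continuous hf,
    CircleImmersion.exists_ne_immersion_eq⟩
end

section
/- Let $i_1, i_2 : M \to N$ be proper immersions with $i_1(M) \ne i_2(M)$. Then there exist open subsets $\mathcal{V}, \mathcal{W}$ of the space of proper immersions (with the compact-open/Whitney $C^0$ topology), each saturated under the right action of $\mathrm{Diff}(M)$ by composition, with $i_1 \in \mathcal{V}$, $i_2 \in \mathcal{W}$, and $\mathcal{V} \cap \mathcal{W} = \emptyset$. In particular the orbits of $i_1$ and $i_2$ are distinct and separated in the quotient topology. -/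
open Function Set
open scoped Manifold Topology ContDiff

/-- The Whitney (graph) $C^0$-topology on the space of maps `M → N`: generated by the sets
of maps whose graph lies in a given open subset of `M × N`. -/
def whitneyC0Topology (M N : Type*) [TopologicalSpace M] [TopologicalSpace N] :
    TopologicalSpace (M → N) :=
  TopologicalSpace.generateFrom
    {S | ∃ U : Set (M × N), IsOpen U ∧ S = {f : M → N | ∀ x, (x, f x) ∈ U}}

/-!
Both open sets are defined through the image alone, so they are saturated under
reparametrisation by any surjection `M → M`, in particular by diffeomorphisms. Say
`p ∈ i₁(M) \ i₂(M)`. Since `i₂` is proper its image is closed, and `N`, being locally compact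
Hausdorff, is regular, so there are disjoint open sets `A ∋ p` and `B ⊇ i₂(M)`. Take
`V = {f | f(M) meets A}` and `W = {f | f(M) ⊆ B}`: `W` is a basic Whitney set, and `V` is a
union of the basic sets `{f | f x ∈ A}`, whose graph condition is
`({x}ᶜ × N) ∪ (M × A)`.
-/

namespace WhitneyC0

variable {M N : Type*} [TopologicalSpace M] [TopologicalSpace N]

theorem isOpen_setOf_range_subset {B : Set N} (hB : IsOpen B) :
    IsOpen[whitneyC0Topology M N] {f | range f ⊆ B} :=
  .basic _ ⟨univ ×ˢ B, isOpen_univ.prod hB, by ext f; simp [range_subset_iff]⟩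

theorem isOpen_setOf_apply_mem [T1Space M] (x : M) {A : Set N} (hA : IsOpen A) :
    IsOpen[whitneyC0Topology M N] {f | f x ∈ A} := by
  refine .basic _ ⟨({x}ᶜ ×ˢ univ) ∪ (univ ×ˢ A),
    (isOpen_compl_singleton.prod isOpen_univ).union (isOpen_univ.prod hA), ?_⟩
  ext f
  refine ⟨fun hf y => ?_, fun hf => ?_⟩
  · rcases eq_or_ne y x with rfl | hy
    · exact .inr ⟨mem_univ _, hf⟩
    · exact .inl ⟨hy, mem_univ _⟩
  · simpa using hf x

theorem isOpen_setOf_range_inter_nonempty [T1Space M] {A : Set N} (hA : IsOpen A) :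
    IsOpen[whitneyC0Topology M N] {f | (range f ∩ A).Nonempty} := by
  have h : {f : M → N | (range f ∩ A).Nonempty} = ⋃ x, {f | f x ∈ A} := by
    ext f; simp [Set.Nonempty, and_comm]
  rw [h]
  exact @isOpen_iUnion _ _ (whitneyC0Topology M N) _ fun x => isOpen_setOf_apply_mem x hA

theorem exists_separation_of_mem_range_of_notMem_range [T1Space M] [RegularSpace N]
    {i j : M → N} (hj : IsClosed (range j)) {p : N} (hpi : p ∈ range i) (hpj : p ∉ range j) :
    ∃ V W : Set (M → N),
      IsOpen[whitneyC0Topology M N] V ∧ IsOpen[whitneyC0Topology M N] W ∧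
      (∀ f ∈ V, ∀ σ : M → M, Surjective σ → f ∘ σ ∈ V) ∧
      (∀ f ∈ W, ∀ σ : M → M, Surjective σ → f ∘ σ ∈ W) ∧
      i ∈ V ∧ j ∈ W ∧ Disjoint V W := by
  have hsep : SeparatedNhds {p} (range j) := by
    rw [separatedNhds_iff_disjoint, nhdsSet_singleton, disjoint_nhds_nhdsSet, hj.closure_eq]
    exact hpj
  obtain ⟨A, B, hA, hB, hpA, hjB, hAB⟩ := hsep
  refine ⟨{f | (range f ∩ A).Nonempty}, {f | range f ⊆ B},
    isOpen_setOf_range_inter_nonempty hA, isOpen_setOf_range_subset hB,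
    fun f hf σ hσ => by rwa [mem_ofPred_eq, hσ.range_comp],
    fun f hf σ hσ => by rwa [mem_ofPred_eq, hσ.range_comp],
    ⟨p, hpi, singleton_subset_iff.mp hpA⟩, hjB, ?_⟩
  rw [Set.disjoint_left]
  rintro f ⟨q, hqf, hqA⟩ hfB
  exact hAB.notMem_of_mem_left hqA (hfB hqf)

theorem exists_separation_of_range_ne [T1Space M] [RegularSpace N] {i₁ i₂ : M → N}
    (h₁ : IsClosed (range i₁)) (h₂ : IsClosed (range i₂)) (h : range i₁ ≠ range i₂) :
    ∃ V W : Set (M → N),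
      IsOpen[whitneyC0Topology M N] V ∧ IsOpen[whitneyC0Topology M N] W ∧
      (∀ f ∈ V, ∀ σ : M → M, Surjective σ → f ∘ σ ∈ V) ∧
      (∀ f ∈ W, ∀ σ : M → M, Surjective σ → f ∘ σ ∈ W) ∧
      i₁ ∈ V ∧ i₂ ∈ W ∧ Disjoint V W := by
  obtain ⟨p, hp₁, hp₂⟩ | ⟨p, hp₂, hp₁⟩ : (range i₁ \ range i₂).Nonempty ∨
      (range i₂ \ range i₁).Nonempty := by
    by_contra! hsub
    simp only [sdiff_eq_empty] at hsub
    exact h (hsub.1.antisymm hsub.2)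
  · exact exists_separation_of_mem_range_of_notMem_range h₂ hp₁ hp₂
  · obtain ⟨V, W, hV, hW, hVsat, hWsat, h₂V, h₁W, hVW⟩ :=
      exists_separation_of_mem_range_of_notMem_range h₁ hp₂ hp₁
    exact ⟨W, V, hW, hV, hWsat, hVsat, h₁W, h₂V, hVW.symm⟩

end WhitneyC0

theorem isClosed_range_of_isCompact_preimage {X Y : Type*} [TopologicalSpace X]
    [TopologicalSpace Y] [T2Space Y] [CompactlyCoherentSpace Y] {f : X → Y} (hf : Continuous f)
    (hprop : ∀ K : Set Y, IsCompact K → IsCompact (f ⁻¹' K)) : IsClosed (range f) :=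
  (isProperMap_iff_isCompact_preimage.mpr ⟨hf, fun K hK => hprop K hK⟩).isClosed_range

theorem stmt_4_general
    {E : Type*} [NormedAddCommGroup E] [NormedSpace ℝ E]
    {H : Type*} [TopologicalSpace H] {I : ModelWithCorners ℝ E H}
    {M : Type*} [TopologicalSpace M] [ChartedSpace H M] [T2Space M]
    {E' : Type*} [NormedAddCommGroup E'] [NormedSpace ℝ E'] [FiniteDimensional ℝ E']
    {H' : Type*} [TopologicalSpace H'] {J : ModelWithCorners ℝ E' H'}
    {N : Type*} [TopologicalSpace N] [ChartedSpace H' N] [T2Space N]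
    (i₁ i₂ : M → N)
    (h₁ : ContMDiff I J (⊤ : ℕ∞) i₁)
    (h₁prop : ∀ K : Set N, IsCompact K → IsCompact (i₁ ⁻¹' K))
    (h₂ : ContMDiff I J (⊤ : ℕ∞) i₂)
    (h₂prop : ∀ K : Set N, IsCompact K → IsCompact (i₂ ⁻¹' K))
    (him : Set.range i₁ ≠ Set.range i₂) :
    ∃ V W : Set (M → N),
      IsOpen[whitneyC0Topology M N] V ∧ IsOpen[whitneyC0Topology M N] W ∧
      (∀ j ∈ V, ∀ f : M ≃ₘ⟮I, I⟯ M, (j ∘ f) ∈ V) ∧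
      (∀ j ∈ W, ∀ f : M ≃ₘ⟮I, I⟯ M, (j ∘ f) ∈ W) ∧
      i₁ ∈ V ∧ i₂ ∈ W ∧ V ∩ W = ∅ := by
  have : LocallyCompactSpace N := Manifold.locallyCompact_of_finiteDimensional J
  obtain ⟨V, W, hV, hW, hVsat, hWsat, h₁V, h₂W, hVW⟩ :=
    WhitneyC0.exists_separation_of_range_ne
      (isClosed_range_of_isCompact_preimage h₁.continuous h₁prop)
      (isClosed_range_of_isCompact_preimage h₂.continuous h₂prop) him
  exact ⟨V, W, hV, hW, fun j hj f => hVsat j hj f f.toEquiv.surjective,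
    fun j hj f => hWsat j hj f f.toEquiv.surjective, h₁V, h₂W, disjoint_iff_inter_eq_empty.mp hVW⟩

/-- Two proper immersions with different images can be separated by disjoint
`Diff(M)`-saturated open (Whitney $C^0$) neighbourhoods in the space of proper immersions;
in particular their orbits are separated in the quotient topology. -/
theorem stmt_4
    {E : Type*} [NormedAddCommGroup E] [NormedSpace ℝ E] [FiniteDimensional ℝ E]
    {H : Type*} [TopologicalSpace H] {I : ModelWithCorners ℝ E H}
    {M : Type*} [TopologicalSpace M] [ChartedSpace H M] [IsManifold I (⊤ : ℕ∞) M]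
    [T2Space M] [SecondCountableTopology M] [ConnectedSpace M] [I.Boundaryless]
    {E' : Type*} [NormedAddCommGroup E'] [NormedSpace ℝ E'] [FiniteDimensional ℝ E']
    {H' : Type*} [TopologicalSpace H'] {J : ModelWithCorners ℝ E' H'}
    {N : Type*} [TopologicalSpace N] [ChartedSpace H' N] [IsManifold J (⊤ : ℕ∞) N]
    [T2Space N] [SecondCountableTopology N] [ConnectedSpace N] [J.Boundaryless]
    (hdim : Module.finrank ℝ E ≤ Module.finrank ℝ E')
    (i₁ i₂ : M → N)
    (h₁ : ContMDiff I J (⊤ : ℕ∞) i₁) (h₁imm : ∀ x : M, Function.Injective (mfderiv I J i₁ x))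
    (h₁prop : ∀ K : Set N, IsCompact K → IsCompact (i₁ ⁻¹' K))
    (h₂ : ContMDiff I J (⊤ : ℕ∞) i₂) (h₂imm : ∀ x : M, Function.Injective (mfderiv I J i₂ x))
    (h₂prop : ∀ K : Set N, IsCompact K → IsCompact (i₂ ⁻¹' K))
    (him : Set.range i₁ ≠ Set.range i₂) :
    ∃ V W : Set (M → N),
      IsOpen[whitneyC0Topology M N] V ∧ IsOpen[whitneyC0Topology M N] W ∧
      (∀ j ∈ V, ∀ f : M ≃ₘ⟮I, I⟯ M, (j ∘ f) ∈ V) ∧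
      (∀ j ∈ W, ∀ f : M ≃ₘ⟮I, I⟯ M, (j ∘ f) ∈ W) ∧
      i₁ ∈ V ∧ i₂ ∈ W ∧ V ∩ W = ∅ :=
  stmt_4_general i₁ i₂ h₁ h₁prop h₂ h₂prop him
end
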